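/- Let c be a circle-count function and T : (Fin n → Bool) → ℕ any function. The coefficient of A^{n + 2(c(S_A) − 1)} in the bracket ⟨n, c, T⟩ equals the polynomial ∑_{σ A-maximal} (−1)^{c(σ)−1} · t^{T(σ)} in ℤ[t], the sum over all A-maximal states σ. -/

import Mathlib

open LaurentPolynomial Polynomial Finset

/-- `aC σ` is the number of A-smoothings of the state `σ`, i.e. the number of
coordinates where `σ` takes the value `true`. -/
def aC {n : ℕ} (σ : Fin n → Bool) : ℕ := (Finset.univ.filter fun i => σ i = true).card

/-- `bC σ = n - aC σ` is the number of B-smoothings of the state `σ`. -/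
def bC {n : ℕ} (σ : Fin n → Bool) : ℕ := n - aC σ

/-- Two states are adjacent if they differ in exactly one coordinate. -/
def Adjacent {n : ℕ} (σ τ : Fin n → Bool) : Prop :=
  (Finset.univ.filter fun i => σ i ≠ τ i).card = 1

/-- `StateLE σ τ` iff `τ i = true` whenever `σ i = true`. -/
def StateLE {n : ℕ} (σ τ : Fin n → Bool) : Prop := ∀ i, σ i = true → τ i = true

/-- A circle-count function: `c σ ≥ 1` for all states and `|c σ - c τ| = 1`
for adjacent states. -/
def IsCircleCount {n : ℕ} (c : (Fin n → Bool) → ℕ) : Prop :=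
  (∀ σ, 1 ≤ c σ) ∧ ∀ σ τ, Adjacent σ τ → |(c σ : ℤ) - (c τ : ℤ)| = 1

/-- The all-A state: the constant-`true` state. -/
def SA (n : ℕ) : Fin n → Bool := fun _ => true

/-- The all-B state: the constant-`false` state. -/
def SB (n : ℕ) : Fin n → Bool := fun _ => false

/-- A state `σ` is A-maximal for `c` if `c σ = c S_A + b σ`. -/
def AMaximal {n : ℕ} (c : (Fin n → Bool) → ℕ) (σ : Fin n → Bool) : Prop :=
  c σ = c (SA n) + bC σ

/-- A state `σ` is B-minimal for `c` if `c σ = c S_B + a σ`. -/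
def BMinimal {n : ℕ} (c : (Fin n → Bool) → ℕ) (σ : Fin n → Bool) : Prop :=
  c σ = c (SB n) + aC σ

instance {n : ℕ} (c : (Fin n → Bool) → ℕ) : DecidablePred (AMaximal c) :=
  fun σ => inferInstanceAs (Decidable (c σ = c (SA n) + bC σ))

instance {n : ℕ} (c : (Fin n → Bool) → ℕ) : DecidablePred (BMinimal c) :=
  fun σ => inferInstanceAs (Decidable (c σ = c (SB n) + aC σ))

/-- The contribution `A^{a(σ)-b(σ)} (−A²−A⁻²)^{c(σ)-1} t^{T(σ)}` of the state `σ`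
to the Kauffman bracket; a Laurent polynomial in `A` over `ℤ[t]`, where `A` is the
Laurent variable `LaurentPolynomial.T 1` and `t` is `Polynomial.X`. -/
noncomputable def contrib {n : ℕ} (c T : (Fin n → Bool) → ℕ) (σ : Fin n → Bool) :
    LaurentPolynomial (Polynomial ℤ) :=
  LaurentPolynomial.T ((aC σ : ℤ) - (bC σ : ℤ)) *
    (-(LaurentPolynomial.T 2) - LaurentPolynomial.T (-2)) ^ (c σ - 1) *
    LaurentPolynomial.C (Polynomial.X ^ T σ)

/-- The Kauffman bracket state sum `⟨n, c, T⟩`. -/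
noncomputable def bracket (n : ℕ) (c T : (Fin n → Bool) → ℕ) :
    LaurentPolynomial (Polynomial ℤ) :=
  ∑ σ : Fin n → Bool, contrib c T σ

/-- The coefficient of `A^j` in a Laurent polynomial over `ℤ[t]`. -/
noncomputable def coeffA (P : LaurentPolynomial (Polynomial ℤ)) (j : ℤ) : Polynomial ℤ := P.coeff j

/-- The largest exponent of `A` with nonzero coefficient (junk value `0` for `P = 0`). -/
noncomputable def maxdeg (P : LaurentPolynomial (Polynomial ℤ)) : ℤ := WithBot.unbotD 0 P.coeff.support.max

/-- The smallest exponent of `A` with nonzero coefficient (junk value `0` for `P = 0`). -/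
noncomputable def mindeg (P : LaurentPolynomial (Polynomial ℤ)) : ℤ := WithTop.untopD 0 P.coeff.support.min

/-- `spanDeg P = maxdeg P - mindeg P`. -/
noncomputable def spanDeg (P : LaurentPolynomial (Polynomial ℤ)) : ℤ := maxdeg P - mindeg P


section Aux

lemma aC_le {n : ℕ} (σ : Fin n → Bool) : aC σ ≤ n := by
  simpa [aC] using Finset.card_filter_le Finset.univ (fun i => σ i = true)

lemma aC_add_bC {n : ℕ} (σ : Fin n → Bool) : aC σ + bC σ = n := by
  have := aC_le σ; unfold bC; omega

lemma eq_SA_of_bC_eq_zero {n : ℕ} (σ : Fin n → Bool) (h : bC σ = 0) : σ = SA n := by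
  have h1 : aC σ = n := by have := aC_le σ; unfold bC at h; omega
  have h2 : (Finset.univ.filter fun i => σ i = true) = Finset.univ := by
    apply Finset.eq_univ_of_card
    simpa [aC] using h1
  funext i
  have : i ∈ Finset.univ.filter fun i => σ i = true := by rw [h2]; exact Finset.mem_univ i
  simpa [SA] using (Finset.mem_filter.mp this).2

lemma upper {n : ℕ} {c : (Fin n → Bool) → ℕ} (hc : IsCircleCount c) (σ : Fin n → Bool) :
    c σ ≤ c (SA n) + bC σ := by
  suffices H : ∀ m (σ : Fin n → Bool), bC σ = m → c σ ≤ c (SA n) + m from H _ σ rfl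
  intro m
  induction m with
  | zero => intro σ h; rw [eq_SA_of_bC_eq_zero σ h]; omega
  | succ m ih =>
    intro σ h
    obtain ⟨i, hi⟩ : ∃ i, σ i = false := by
      by_contra hall
      push_neg at hall
      have : σ = SA n := funext fun i => by
        cases hσ : σ i with
        | false => exact absurd hσ (hall i)
        | true => rfl
      rw [this] at h
      have : bC (SA n) = 0 := by
        have : aC (SA n) = n := by simp [aC, SA]
        unfold bC; omega
      omega
    set τ := Function.update σ i true with hτ
    have hnotmem : i ∉ Finset.univ.filter fun j => σ j = true := by simp [hi]
    have haτ : aC τ = aC σ + 1 := by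
      have hset : (Finset.univ.filter fun j => τ j = true)
          = insert i (Finset.univ.filter fun j => σ j = true) := by
        ext j
        by_cases hj : j = i <;> simp [hτ, Function.update_apply, hj]
      rw [aC, hset, Finset.card_insert_of_notMem hnotmem, aC]
    have hbτ : bC τ = m := by
      have h2 := aC_add_bC σ
      have h3 := aC_add_bC τ
      omega
    have hadj : Adjacent σ τ := by
      have hset : (Finset.univ.filter fun j => σ j ≠ τ j) = {i} := by
        ext j
        by_cases hj : j = i <;> simp [hτ, Function.update_apply, hj, hi]
      rw [Adjacent, hset, Finset.card_singleton]
    have habs := hc.2 σ τ hadj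
    have h1 : (c σ : ℤ) ≤ c τ + 1 := by
      rcases abs_eq (by norm_num : (0:ℤ) ≤ 1) |>.mp habs with h' | h' <;> omega
    have h2 := ih τ hbτ
    omega

lemma CT_apply (p : Polynomial ℤ) (a j : ℤ) :
    ((LaurentPolynomial.C p * LaurentPolynomial.T a) : LaurentPolynomial (Polynomial ℤ)).coeff j
      = if a = j then p else 0 := by
  rw [← LaurentPolynomial.single_eq_C_mul_T]
  exact Finsupp.single_apply

lemma contrib_apply {n : ℕ} (c T : (Fin n → Bool) → ℕ) (σ : Fin n → Bool) (j : ℤ) :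
    (contrib c T σ).coeff j =
      ∑ i ∈ Finset.range (c σ - 1 + 1),
        if (aC σ : ℤ) - (bC σ : ℤ) + ((i : ℤ) * 2 + ((c σ - 1 - i : ℕ) : ℤ) * (-2)) = j
        then ((-1) ^ (c σ - 1) * ((c σ - 1).choose i : Polynomial ℤ)) * Polynomial.X ^ T σ
        else 0 := by
  set k := c σ - 1 with hk
  have h1 : (-(LaurentPolynomial.T 2) - LaurentPolynomial.T (-2)
        : LaurentPolynomial (Polynomial ℤ)) ^ k
      = ∑ i ∈ Finset.range (k + 1),
          LaurentPolynomial.C ((-1) ^ k * ((k.choose i : Polynomial ℤ))) *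
            LaurentPolynomial.T ((i : ℤ) * 2 + ((k - i : ℕ) : ℤ) * (-2)) := by
    have hneg : (-(LaurentPolynomial.T 2) - LaurentPolynomial.T (-2)
        : LaurentPolynomial (Polynomial ℤ))
        = (-1) * (LaurentPolynomial.T 2 + LaurentPolynomial.T (-2)) := by ring
    rw [hneg, mul_pow, add_pow, Finset.mul_sum]
    refine Finset.sum_congr rfl fun i hi => ?_
    rw [LaurentPolynomial.T_pow, LaurentPolynomial.T_pow, LaurentPolynomial.T_add]
    have hC1 : ((-1 : LaurentPolynomial (Polynomial ℤ))) ^ k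
        = LaurentPolynomial.C ((-1 : Polynomial ℤ) ^ k) := by
      rw [map_pow, map_neg, map_one]
    have hC2 : ((k.choose i : LaurentPolynomial (Polynomial ℤ)))
        = LaurentPolynomial.C ((k.choose i : Polynomial ℤ)) := by
      simp [map_natCast]
    rw [map_mul, hC1, hC2]
    ring
  rw [contrib, h1, Finset.mul_sum, Finset.sum_mul]
  rw [AddMonoidAlgebra.coeff_sum, Finset.sum_apply']
  refine Finset.sum_congr rfl fun i hi => ?_
  have : LaurentPolynomial.T ((aC σ : ℤ) - (bC σ : ℤ)) *
        (LaurentPolynomial.C ((-1) ^ k * ((k.choose i : Polynomial ℤ))) *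
          LaurentPolynomial.T ((i : ℤ) * 2 + ((k - i : ℕ) : ℤ) * (-2))) *
        LaurentPolynomial.C (Polynomial.X ^ T σ)
      = LaurentPolynomial.C (((-1) ^ k * ((k.choose i : Polynomial ℤ))) * Polynomial.X ^ T σ) *
        LaurentPolynomial.T ((aC σ : ℤ) - (bC σ : ℤ) +
          ((i : ℤ) * 2 + ((k - i : ℕ) : ℤ) * (-2))) := by
    simp only [LaurentPolynomial.T_add, map_mul]
    ring
  rw [this, CT_apply]

end Aux

/-- The coefficient of `A^{n + 2(c S_A − 1)}` in the bracket is the sum of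
`(−1)^{c σ − 1} t^{T σ}` over all A-maximal states `σ`. -/
theorem stmt10 {n : ℕ} (c : (Fin n → Bool) → ℕ) (hc : IsCircleCount c)
    (T : (Fin n → Bool) → ℕ) :
    coeffA (bracket n c T) ((n : ℤ) + 2 * ((c (SA n) : ℤ) - 1)) =
      ∑ σ ∈ Finset.univ.filter (fun σ => AMaximal c σ),
        (-1) ^ (c σ - 1) * Polynomial.X ^ T σ := by
  set j : ℤ := (n : ℤ) + 2 * ((c (SA n) : ℤ) - 1) with hj
  have key : ∀ σ : Fin n → Bool, (contrib c T σ).coeff j =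
      if AMaximal c σ then ((-1) ^ (c σ - 1) * Polynomial.X ^ T σ : Polynomial ℤ) else 0 := by
    intro σ
    have hab := aC_add_bC σ
    have h1 : 1 ≤ c σ := hc.1 σ
    have h1' : 1 ≤ c (SA n) := hc.1 _
    have hub := upper hc σ
    rw [contrib_apply]
    by_cases hmax : AMaximal c σ
    · rw [if_pos hmax]
      rw [AMaximal] at hmax
      rw [Finset.sum_eq_single_of_mem (c σ - 1) (Finset.self_mem_range_succ _)]
      · rw [if_pos (by omega), Nat.choose_self, Nat.cast_one, mul_one]
      · intro i hi hne
        rw [Finset.mem_range] at hi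
        rw [if_neg (by omega)]
    · rw [if_neg hmax]
      rw [AMaximal] at hmax
      apply Finset.sum_eq_zero
      intro i hi
      rw [Finset.mem_range] at hi
      rw [if_neg (by omega)]
  rw [coeffA, bracket, AddMonoidAlgebra.coeff_sum, Finset.sum_apply']
  rw [Finset.sum_filter]
  exact Finset.sum_congr rfl fun σ _ => key σ
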